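/- arXiv:2411.00343 — 2 statements merged into one kernel-verified Lean document; each statement's English description precedes it below -/
import Mathlib

section
/- Every triangle-forest G has a matching M such that the graph G/M obtained by contracting every edge of M is a forest. -/
open SimpleGraph

/-- `H` is isomorphic to a subgraph of `G`. -/
def Contains {α β : Type} (H : SimpleGraph α) (G : SimpleGraph β) : Prop :=
  ∃ f : α ↪ β, ∀ ⦃u v⦄, H.Adj u v → G.Adj (f u) (f v)

/-- The strong product of two graphs. -/
def StrongProd {α β : Type} (G : SimpleGraph α) (H : SimpleGraph β) :
    SimpleGraph (α × β) where
  Adj x y := x ≠ y ∧ (x.1 = y.1 ∨ G.Adj x.1 y.1) ∧ (x.2 = y.2 ∨ H.Adj x.2 y.2)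
  symm := by
    constructor
    rintro x y ⟨h1, h2, h3⟩
    exact ⟨h1.symm, h2.imp Eq.symm SimpleGraph.Adj.symm, h3.imp Eq.symm SimpleGraph.Adj.symm⟩
  loopless := ⟨fun x h => h.1 rfl⟩

/-- `H` is a minor of `G`, witnessed by disjoint connected branch sets. -/
def IsMinorOf {α β : Type} (H : SimpleGraph α) (G : SimpleGraph β) : Prop :=
  ∃ B : α → Set β,
    (∀ a, (G.induce (B a)).Connected) ∧
    (Pairwise fun a b => Disjoint (B a) (B b)) ∧
    (∀ ⦃a b⦄, H.Adj a b → ∃ x ∈ B a, ∃ y ∈ B b, G.Adj x y)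

/-- A graph is planar iff it has no `K₅` minor and no `K₃,₃` minor (Wagner's theorem). -/
def IsPlanar {α : Type} (G : SimpleGraph α) : Prop :=
  ¬ IsMinorOf (completeGraph (Fin 5)) G ∧
  ¬ IsMinorOf (completeBipartiteGraph (Fin 3) (Fin 3)) G

/-- `G` has a tree-decomposition of width at most `k`. -/
def HasTreewidthLE {α : Type} (G : SimpleGraph α) (k : ℕ) : Prop :=
  ∃ (ι : Type) (T : SimpleGraph ι) (B : ι → Set α),
    T.IsTree ∧
    (∀ ⦃u v⦄, G.Adj u v → ∃ i, u ∈ B i ∧ v ∈ B i) ∧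
    (∀ v, (T.induce {i | v ∈ B i}).Connected) ∧
    (∀ i, (B i).Finite ∧ (B i).ncard ≤ k + 1)

/-- `G` has a path-decomposition of width at most `k`. -/
def HasPathwidthLE {α : Type} (G : SimpleGraph α) (k : ℕ) : Prop :=
  ∃ (m : ℕ) (B : Fin m → Set α),
    (∀ ⦃u v⦄, G.Adj u v → ∃ i, u ∈ B i ∧ v ∈ B i) ∧
    (∀ v, ∃ i, v ∈ B i) ∧
    (∀ v (i j l : Fin m), i ≤ j → j ≤ l → v ∈ B i → v ∈ B l → v ∈ B j) ∧
    (∀ i, (B i).Finite ∧ (B i).ncard ≤ k + 1)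

/-- The quotient of `G` by a family of sets of vertices: vertices are the members of `P`,
two parts being adjacent iff some pair of representatives is adjacent in `G`. -/
def QuotientGraph {α : Type} (G : SimpleGraph α) (P : Set (Set α)) :
    SimpleGraph P where
  Adj A B := A ≠ B ∧ ∃ a ∈ (A : Set α), ∃ b ∈ (B : Set α), G.Adj a b
  symm := by
    constructor
    rintro A B ⟨h1, a, ha, b, hb, hab⟩
    exact ⟨h1.symm, b, hb, a, ha, hab.symm⟩
  loopless := ⟨fun A h => h.1 rfl⟩

/-- A partition of the vertices of `G` is a tree-partition if the quotient graph is
contained in a tree. -/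
def IsTreePartition {α : Type} (G : SimpleGraph α) (P : Set (Set α)) : Prop :=
  Setoid.IsPartition P ∧
  ∃ (ι : Type) (T : SimpleGraph ι), T.IsTree ∧ Contains (QuotientGraph G P) T

/-- A matching: a set of edges of `G`, pairwise not sharing a vertex. -/
def IsMatchingSet {α : Type} (G : SimpleGraph α) (M : Set (Sym2 α)) : Prop :=
  M ⊆ G.edgeSet ∧ M.Pairwise fun e f => ∀ v, v ∈ e → v ∉ f

/-- The parts obtained from a matching: matched pairs and singletons of unmatched vertices. -/
def matchingParts {α : Type} (M : Set (Sym2 α)) : Set (Set α) :=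
  {S | (∃ e ∈ M, S = {x | x ∈ e}) ∨ ∃ v, (∀ e ∈ M, v ∉ e) ∧ S = {v}}

/-- The graph `G/M` obtained by contracting each edge of a matching `M`. -/
def ContractMatching {α : Type} (G : SimpleGraph α) (M : Set (Sym2 α)) :
    SimpleGraph (matchingParts M) :=
  QuotientGraph G (matchingParts M)

/-- A graph is a path graph if it is isomorphic to `pathGraph n` for some `n`. -/
def IsPathGraph {α : Type} (G : SimpleGraph α) : Prop :=
  ∃ n : ℕ, Nonempty (G ≃g SimpleGraph.pathGraph n)

/-- A graph in which every cycle is a triangle. -/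
def IsTriangleForest {α : Type} (G : SimpleGraph α) : Prop :=
  ∀ (v : α) (w : G.Walk v v), w.IsCycle → w.length = 3

/-- `G` is `k`-apex: removing at most `k` vertices leaves a planar graph. -/
def IsKApex {α : Type} (G : SimpleGraph α) (k : ℕ) : Prop :=
  ∃ A : Set α, A.ncard ≤ k ∧ IsPlanar (G.induce Aᶜ)

/-- `G` is an apex-forest: removing at most one vertex leaves a forest. -/
def IsApexForest {α : Type} (G : SimpleGraph α) : Prop :=
  ∃ A : Set α, A.ncard ≤ 1 ∧ (G.induce Aᶜ).IsAcyclic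

/-- `G⁺`: the graph `G` together with one new dominant vertex. -/
def AddDominant {α : Type} (G : SimpleGraph α) : SimpleGraph (Option α) where
  Adj x y := match x, y with
    | some a, some b => G.Adj a b
    | some _, none => True
    | none, some _ => True
    | none, none => False
  symm := by constructor; rintro (_|a) (_|b) h <;> simp_all [SimpleGraph.Adj.symm, adj_symm]
  loopless := by constructor; rintro (_|a) h <;> simp_all

/-- `G'` is a distension of `G`: for each edge `vw` of `G`, a non-empty path, complete
to `{v, w}`, is added, with the added paths disjoint from `G` and from each other. -/
def IsDistension {α β : Type} (G : SimpleGraph α) (G' : SimpleGraph β) : Prop :=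
  ∃ (g : α ↪ β) (f : β → Sym2 α),
    (∀ u v : α, G'.Adj (g u) (g v) ↔ G.Adj u v) ∧
    (∀ w : β, w ∉ Set.range g → f w ∈ G.edgeSet) ∧
    (∀ w : β, w ∉ Set.range g → ∀ v : α, (G'.Adj w (g v) ↔ v ∈ f w)) ∧
    (∀ w w' : β, w ∉ Set.range g → w' ∉ Set.range g → G'.Adj w w' → f w = f w') ∧
    (∀ e ∈ G.edgeSet, {w : β | w ∉ Set.range g ∧ f w = e}.Nonempty ∧
      IsPathGraph (G'.induce {w : β | w ∉ Set.range g ∧ f w = e}))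

/-! Root every component and layer the vertices by their distance `depth` to the root. Two
distinct vertices of the same depth `k` are joined by a path of even length `2m ≥ 2` through a
common ancestor, all of whose vertices have depth at most `k`. Closing such a path into a cycle
shows, when every cycle is a triangle, that a vertex has at most one neighbour of smaller depth,
and that the ends of an edge inside a layer have a common neighbour one layer down. Hence the
edges inside the layers form a matching, and after contracting it every part still has at most
one neighbour of smaller depth. A graph ranked so that adjacent vertices have different ranks and
each vertex has at most one neighbour of lower rank is a forest: the top of a cycle would have two.
-/

namespace SimpleGraph

theorem isAcyclic_of_rank {W : Type*} {H : SimpleGraph W} (r : W → ℕ)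
    (h_ne : ∀ ⦃u v⦄, H.Adj u v → r u ≠ r v)
    (h_low : ∀ ⦃u v v'⦄, H.Adj u v → H.Adj u v' → r v < r u → r v' < r u → v = v') :
    H.IsAcyclic := by
  classical
  intro w c hc
  obtain ⟨u, hu, hmax⟩ := c.support.toFinset.exists_max_image r ⟨w, by simp⟩
  rw [List.mem_toFinset] at hu
  set c' := c.rotate u hu
  have hc' : c'.IsCycle := hc.rotate hu
  have hlow : ∀ x ∈ c'.support, H.Adj u x → r x < r u := fun x hx hux =>
    (hmax x (by simpa [c'] using hx)).lt_of_ne (h_ne hux).symm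
  have hsnd := c'.adj_snd hc'.not_nil
  have hpen := (c'.adj_penultimate hc'.not_nil).symm
  exact hc'.snd_ne_penultimate (h_low hsnd hpen (hlow _ (c'.getVert_mem_support 1) hsnd)
    (hlow _ (c'.getVert_mem_support _) hpen))

variable {V : Type*} (G : SimpleGraph V)

noncomputable def componentRoot (v : V) : V := (G.connectedComponentMk v).out

noncomputable def depth (v : V) : ℕ := G.dist (G.componentRoot v) v

variable {G}

theorem reachable_componentRoot (v : V) : G.Reachable (G.componentRoot v) v :=
  ConnectedComponent.exact (G.connectedComponentMk v).out_eq

theorem componentRoot_eq_of_adj {u v : V} (h : G.Adj u v) :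
    G.componentRoot u = G.componentRoot v := by
  rw [componentRoot, ConnectedComponent.connectedComponentMk_eq_of_adj h, componentRoot]

theorem depth_le_depth_add_one_of_adj {u v : V} (h : G.Adj u v) :
    G.depth v ≤ G.depth u + 1 := by
  have := h.reachable.dist_triangle_right (G.componentRoot u)
  rw [dist_eq_one_iff_adj.mpr h] at this
  rwa [depth, depth, ← componentRoot_eq_of_adj h]

theorem eq_componentRoot_of_depth_eq_zero {v : V} (h : G.depth v = 0) :
    v = G.componentRoot v :=
  ((reachable_componentRoot v).dist_eq_zero_iff.mp h).symm

theorem exists_adj_depth_eq_of_depth_eq_succ {v : V} {k : ℕ} (h : G.depth v = k + 1) :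
    ∃ u, G.Adj v u ∧ G.depth u = k := by
  obtain ⟨p, hp⟩ : ∃ p : G.Walk (G.componentRoot v) v, p.length = G.depth v :=
    (reachable_componentRoot v).exists_walk_length_eq_dist
  have hnil : ¬ p.reverse.Nil := by
    rw [← Walk.length_eq_zero_iff, Walk.length_reverse]; omega
  have hadj := p.reverse.adj_snd hnil
  have hle : G.depth p.reverse.snd ≤ p.reverse.tail.length := by
    rw [depth, ← componentRoot_eq_of_adj hadj, dist_comm]
    exact G.dist_le _
  have htail := p.reverse.length_tail_add_one hnil
  have hge := depth_le_depth_add_one_of_adj hadj.symm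
  rw [Walk.length_reverse] at htail
  exact ⟨_, hadj, by omega⟩

theorem exists_paths_to_common_ancestor (k : ℕ) {a b : V}
    (hab : G.componentRoot a = G.componentRoot b) (ha : G.depth a = k) (hb : G.depth b = k) :
    ∃ (z : V) (p : G.Walk a z) (q : G.Walk b z), p.length = q.length ∧
      G.depth a = G.depth z + p.length ∧ (p.append q.reverse).IsPath ∧
      ∀ x ∈ (p.append q.reverse).support, G.depth x ≤ k := by
  induction k generalizing a b with
  | zero =>
    obtain rfl : a = b := by
      rw [eq_componentRoot_of_depth_eq_zero ha, eq_componentRoot_of_depth_eq_zero hb, hab]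
    exact ⟨a, .nil, .nil, rfl, by simp, by simp, by simp [ha]⟩
  | succ k ih =>
    by_cases hab' : a = b
    · subst hab'
      exact ⟨a, .nil, .nil, rfl, by simp, by simp, by simp [ha]⟩
    obtain ⟨a', haa', ha'⟩ := exists_adj_depth_eq_of_depth_eq_succ ha
    obtain ⟨b', hbb', hb'⟩ := exists_adj_depth_eq_of_depth_eq_succ hb
    obtain ⟨z, p, q, hpq, hz, hpath, hle⟩ := ih (by
      rw [← componentRoot_eq_of_adj haa', ← componentRoot_eq_of_adj hbb', hab]) ha' hb'
    have hwalk : (Walk.cons haa' p).append (Walk.cons hbb' q).reverse =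
        Walk.cons haa' ((p.append q.reverse).concat hbb'.symm) := by
      simp [Walk.reverse_cons, Walk.concat_eq_append, Walk.append_assoc]
    have ha_notMem : a ∉ (p.append q.reverse).support := fun h => by have := hle a h; omega
    have hb_notMem : b ∉ (p.append q.reverse).support := fun h => by have := hle b h; omega
    refine ⟨z, .cons haa' p, .cons hbb' q, by simp [hpq], by simp; omega, ?_, ?_⟩
    · rw [hwalk, Walk.cons_isPath_iff, Walk.concat_isPath_iff, Walk.support_concat]
      simp [hpath, ha_notMem, hb_notMem, hab']
    · rw [hwalk]
      intro x hx
      simp only [Walk.support_cons, Walk.support_concat, List.mem_cons, List.mem_append,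
        List.not_mem_nil, or_false] at hx
      rcases hx with rfl | hx | rfl
      · omega
      · have := hle x hx; omega
      · omega

def horizontalEdges : Set (Sym2 V) := {e ∈ G.edgeSet | (e.map G.depth).IsDiag}

theorem mk_mem_horizontalEdges {a b : V} :
    s(a, b) ∈ G.horizontalEdges ↔ G.Adj a b ∧ G.depth a = G.depth b := by
  simp [horizontalEdges]

end SimpleGraph

section ContractMatching

variable {V : Type} {G : SimpleGraph V} {M : Set (Sym2 V)}

theorem eq_or_mem_of_mem_matchingParts {S : Set V} (hS : S ∈ matchingParts M) {x y : V}
    (hx : x ∈ S) (hy : y ∈ S) : x = y ∨ s(x, y) ∈ M := by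
  rcases hS with ⟨e, he, rfl⟩ | ⟨v, -, rfl⟩
  · by_cases hxy : x = y
    · exact .inl hxy
    · exact .inr ((Sym2.mem_and_mem_iff hxy).mp ⟨hx, hy⟩ ▸ he)
  · exact .inl (hx.trans hy.symm)

theorem IsMatchingSet.eq_of_mem_matchingParts (hM : IsMatchingSet G M) {S T : Set V}
    (hS : S ∈ matchingParts M) (hT : T ∈ matchingParts M) {v : V} (hvS : v ∈ S)
    (hvT : v ∈ T) : S = T := by
  rcases hS with ⟨e, he, rfl⟩ | ⟨w, hw, rfl⟩ <;> rcases hT with ⟨f, hf, rfl⟩ | ⟨w', hw', rfl⟩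
  · by_contra hef
    exact hM.2 he hf (fun h => hef (h ▸ rfl)) v hvS hvT
  · exact absurd hvS (hvT ▸ hw' e he)
  · exact absurd hvT (hvS ▸ hw f hf)
  · rw [← hvS, ← hvT]

theorem IsMatchingSet.isAcyclic_contractMatching (hM : IsMatchingSet G M) (r : V → ℕ)
    (hr : ∀ ⦃a b⦄, G.Adj a b → (r a = r b ↔ s(a, b) ∈ M))
    (h_low : ∀ ⦃a a' t t'⦄, (a = a' ∨ s(a, a') ∈ M) → G.Adj a t → G.Adj a' t' →
      r t < r a → r t' < r a' → t = t') :
    (ContractMatching G M).IsAcyclic := by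
  have hne : ∀ S : matchingParts M, (S : Set V).Nonempty := by
    rintro ⟨S, ⟨e, -, rfl⟩ | ⟨v, -, rfl⟩⟩
    · exact ⟨e.out.1, Sym2.out_fst_mem e⟩
    · exact Set.singleton_nonempty v
  choose rep hrep using hne
  have hrank : ∀ (S : matchingParts M) {v : V}, v ∈ (S : Set V) → r (rep S) = r v := by
    intro S v hv
    rcases eq_or_mem_of_mem_matchingParts S.2 (hrep S) hv with h | h
    · rw [h]
    · exact (hr (hM.1 h)).2 h
  refine isAcyclic_of_rank (fun S => r (rep S)) ?_ ?_
  · rintro S T ⟨hST, a, ha, b, hb, hab⟩ hrST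
    rw [hrank S ha, hrank T hb] at hrST
    have hP : {x | x ∈ s(a, b)} ∈ matchingParts M := .inl ⟨_, (hr hab).1 hrST, rfl⟩
    exact hST (Subtype.ext ((hM.eq_of_mem_matchingParts S.2 hP ha (Sym2.mem_mk_left a b)).trans
      (hM.eq_of_mem_matchingParts T.2 hP hb (Sym2.mem_mk_right a b)).symm))
  · rintro S T T' ⟨-, a, ha, t, ht, hat⟩ ⟨-, a', ha', t', ht', hat'⟩ hlt hlt'
    rw [hrank S ha, hrank T ht] at hlt
    rw [hrank S ha', hrank T' ht'] at hlt'
    obtain rfl := h_low (eq_or_mem_of_mem_matchingParts S.2 ha ha') hat hat' hlt hlt'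
    exact Subtype.ext (hM.eq_of_mem_matchingParts T.2 T'.2 ht ht')

end ContractMatching

namespace IsTriangleForest

variable {V : Type} {G : SimpleGraph V}

theorem length_le_two_of_isPath (hG : IsTriangleForest G) {u v : V} {p : G.Walk u v}
    (hp : p.IsPath) (h : G.Adj v u) : p.length ≤ 2 := by
  by_contra! hlen
  have hcycle : (Walk.cons h p).IsCycle :=
    Walk.isCycle_iff_isPath_tail_and_le_length.mpr ⟨by simpa using hp, by simp; omega⟩
  have := hG v _ hcycle
  simp only [Walk.length_cons] at this
  omega

theorem commonNeighbors_subsingleton (hG : IsTriangleForest G) {x y : V} (hxy : x ≠ y) :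
    (G.commonNeighbors x y).Subsingleton := by
  intro u hu u' hu'
  rw [mem_commonNeighbors] at hu hu'
  by_contra huu'
  have hp : (Walk.cons hu.1 (Walk.cons hu.2.symm (Walk.cons hu'.2 .nil))).IsPath := by
    simp [hxy, huu', hu.1.ne, hu.2.ne.symm, hu'.1.ne, hu'.2.ne]
  have := hG.length_le_two_of_isPath hp hu'.1.symm
  simp at this

theorem eq_of_adj_of_depth_lt (hG : IsTriangleForest G) {w u u' : V} (hu : G.Adj w u)
    (hu' : G.Adj w u') (hdu : G.depth u < G.depth w) (hdu' : G.depth u' < G.depth w) :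
    u = u' := by
  by_contra hne
  have h1 := depth_le_depth_add_one_of_adj hu.symm
  have h2 := depth_le_depth_add_one_of_adj hu'.symm
  have hroot : G.componentRoot u = G.componentRoot u' := by
    rw [← componentRoot_eq_of_adj hu, componentRoot_eq_of_adj hu']
  obtain ⟨z, p, q, hpq, -, hpath, hle⟩ := exists_paths_to_common_ancestor _ hroot rfl (by omega)
  have hw : w ∉ (p.append q.reverse).support := fun h => by have := hle w h; omega
  have hlen := hG.length_le_two_of_isPath (hpath.concat hw hu'.symm) hu
  have hp0 : p.length ≠ 0 := fun h0 => hne <|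
    (Walk.eq_of_length_eq_zero h0).trans (Walk.eq_of_length_eq_zero (p := q) (hpq ▸ h0)).symm
  simp only [Walk.length_concat, Walk.length_append, Walk.length_reverse] at hlen
  omega

theorem exists_adj_adj_depth_add_one_eq (hG : IsTriangleForest G) {u u' : V}
    (h : G.Adj u u') (hd : G.depth u = G.depth u') :
    ∃ z, G.Adj u z ∧ G.Adj u' z ∧ G.depth z + 1 = G.depth u := by
  obtain ⟨z, p, q, hpq, hz, hpath, -⟩ :=
    exists_paths_to_common_ancestor _ (componentRoot_eq_of_adj h) rfl hd.symm
  have hlen := hG.length_le_two_of_isPath hpath h.symm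
  have hp0 : p.length ≠ 0 := fun h0 => h.ne <|
    (Walk.eq_of_length_eq_zero h0).trans (Walk.eq_of_length_eq_zero (p := q) (hpq ▸ h0)).symm
  simp only [Walk.length_append, Walk.length_reverse] at hlen
  have hp1 : p.length = 1 := by omega
  exact ⟨z, Walk.adj_of_length_eq_one hp1, Walk.adj_of_length_eq_one (hpq ▸ hp1), by omega⟩

theorem eq_of_adj_of_depth_lt_of_horizontal (hG : IsTriangleForest G) {a a' t t' : V}
    (ha : a = a' ∨ s(a, a') ∈ G.horizontalEdges) (ht : G.Adj a t) (ht' : G.Adj a' t')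
    (hdt : G.depth t < G.depth a) (hdt' : G.depth t' < G.depth a') : t = t' := by
  rcases ha with rfl | ha
  · exact hG.eq_of_adj_of_depth_lt ht ht' hdt hdt'
  · rw [mk_mem_horizontalEdges] at ha
    obtain ⟨z, hz, hz', hdz⟩ := hG.exists_adj_adj_depth_add_one_eq ha.1 ha.2
    rw [hG.eq_of_adj_of_depth_lt ht hz hdt (by omega),
      hG.eq_of_adj_of_depth_lt ht' hz' hdt' (by omega)]

theorem isMatchingSet_horizontalEdges (hG : IsTriangleForest G) :
    IsMatchingSet G G.horizontalEdges := by
  refine ⟨fun e he => he.1, ?_⟩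
  rintro e he f hf hef v hve hvf
  obtain ⟨b, rfl⟩ := Sym2.mem_iff_exists.mp hve
  obtain ⟨b', rfl⟩ := Sym2.mem_iff_exists.mp hvf
  rw [mk_mem_horizontalEdges] at he hf
  obtain ⟨z, hvz, hbz, hz⟩ := hG.exists_adj_adj_depth_add_one_eq he.1 he.2
  obtain ⟨z', hvz', hbz', hz'⟩ := hG.exists_adj_adj_depth_add_one_eq hf.1 hf.2
  obtain rfl : z = z' := hG.eq_of_adj_of_depth_lt hvz hvz' (by omega) (by omega)
  have hbb' : b ≠ b' := by rintro rfl; exact hef rfl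
  obtain rfl : v = z := hG.commonNeighbors_subsingleton hbb'
    (G.mem_commonNeighbors.mpr ⟨he.1.symm, hf.1.symm⟩) (G.mem_commonNeighbors.mpr ⟨hbz, hbz'⟩)
  omega

end IsTriangleForest

theorem stmt4_general {V : Type} (G : SimpleGraph V) (hG : IsTriangleForest G) :
    ∃ M : Set (Sym2 V), IsMatchingSet G M ∧ (ContractMatching G M).IsAcyclic :=
  ⟨G.horizontalEdges, hG.isMatchingSet_horizontalEdges,
    hG.isMatchingSet_horizontalEdges.isAcyclic_contractMatching G.depth
      (fun _ _ h => by simp [mk_mem_horizontalEdges, h])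
      (fun _ _ _ _ => hG.eq_of_adj_of_depth_lt_of_horizontal)⟩

/-- Every triangle-forest `G` has a matching `M` such that `G/M` is a forest. -/
theorem stmt4 {V : Type} [Fintype V] (G : SimpleGraph V) (hG : IsTriangleForest G) :
    ∃ M : Set (Sym2 V), IsMatchingSet G M ∧ (ContractMatching G M).IsAcyclic :=
  stmt4_general G hG
end

section
/- For any graphs H₁, H₂ and any positive integer c, a graph G is contained in H₁ ⊠ H₂ ⊠ K_c if and only if G has partitions 𝒫₁ and 𝒫₂ of its vertex set such that G/𝒫ᵢ is contained in Hᵢ for each i ∈ {1,2}, and |A₁ ∩ A₂| ≤ c for each A₁ ∈ 𝒫₁ and A₂ ∈ 𝒫₂. -/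
open SimpleGraph

/-! A partition `𝒫` with `G/𝒫` contained in `H` is the same thing as a weak homomorphism
`G → H` (adjacent vertices go to equal or adjacent vertices) whose nonempty fibres are the
parts of `𝒫`, and an embedding into `H ⊠ K_c` is the same thing as a weak homomorphism into
`H` together with an injective labelling of each fibre by `Fin c`. Hence `G ⊆ H₁ ⊠ H₂ ⊠ K_c`
exactly when there are weak homomorphisms `φᵢ : G → Hᵢ` such that the fibres of
`v ↦ (φ₁ v, φ₂ v)`, which are the sets `A₁ ∩ A₂`, have at most `c` elements. -/

variable {V α β γ : Type}

def IsWeakHom (G : SimpleGraph V) (H : SimpleGraph α) (φ : V → α) : Prop :=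
  ∀ ⦃u v⦄, G.Adj u v → φ u = φ v ∨ H.Adj (φ u) (φ v)

section WeakHom

variable {G : SimpleGraph V}

theorem contains_iff_exists_embedding_isWeakHom {H : SimpleGraph α} :
    Contains G H ↔ ∃ f : V ↪ α, IsWeakHom G H f :=
  exists_congr fun f =>
    ⟨fun h _ _ huv => Or.inr (h huv),
      fun h _ _ huv => (h huv).resolve_left (f.injective.ne (G.ne_of_adj huv))⟩

theorem isWeakHom_completeGraph (φ : V → α) : IsWeakHom G (completeGraph α) φ :=
  fun u v _ => eq_or_ne (φ u) (φ v)

theorem isWeakHom_strongProd_iff {H₁ : SimpleGraph α} {H₂ : SimpleGraph β} {φ : V → α × β} :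
    IsWeakHom G (StrongProd H₁ H₂) φ ↔
      IsWeakHom G H₁ (fun v => (φ v).1) ∧ IsWeakHom G H₂ (fun v => (φ v).2) := by
  refine ⟨fun h => ⟨fun u v huv => ?_, fun u v huv => ?_⟩, fun ⟨h₁, h₂⟩ u v huv => ?_⟩
  · rcases h huv with heq | ⟨-, hadj, -⟩
    exacts [Or.inl (congrArg Prod.fst heq), hadj]
  · rcases h huv with heq | ⟨-, -, hadj⟩
    exacts [Or.inl (congrArg Prod.snd heq), hadj]
  · by_cases heq : φ u = φ v
    exacts [Or.inl heq, Or.inr ⟨heq, h₁ huv, h₂ huv⟩]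

theorem contains_quotientGraph_ker_classes {H : SimpleGraph α} {φ : V → α}
    (hφ : IsWeakHom G H φ) : Contains (QuotientGraph G (Setoid.ker φ).classes) H := by
  choose y hy using fun S : (Setoid.ker φ).classes => S.2
  have hmem : ∀ S : (Setoid.ker φ).classes, ∀ a ∈ (S : Set V), φ a = φ (y S) := by
    intro S a ha
    rw [hy S] at ha
    exact ha
  have hinj : Function.Injective fun S => φ (y S) := by
    intro S T (hST : φ (y S) = φ (y T))
    apply Subtype.ext
    rw [hy S, hy T]
    simp only [Setoid.ker_def, hST]
  refine ⟨⟨_, hinj⟩, ?_⟩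
  rintro S T ⟨hne, a, ha, b, hb, hab⟩
  show H.Adj (φ (y S)) (φ (y T))
  rw [← hmem S a ha, ← hmem T b hb]
  refine (hφ hab).resolve_left fun heq => hne (hinj ?_)
  show φ (y S) = φ (y T)
  rw [← hmem S a ha, ← hmem T b hb, heq]

theorem exists_isWeakHom_fiber_mem_of_contains_quotientGraph {H : SimpleGraph α}
    {P : Set (Set V)} (hP : Setoid.IsPartition P) (h : Contains (QuotientGraph G P) H) :
    ∃ φ : V → α, IsWeakHom G H φ ∧ ∀ v, φ ⁻¹' {φ v} ∈ P := by
  obtain ⟨g, hg⟩ := h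
  choose Q hQ hvQ using fun v => (hP.2 v).exists
  have hQ_eq_iff : ∀ u v, Q u = Q v ↔ u ∈ Q v := fun u v =>
    ⟨fun h => h ▸ hvQ u, fun hu => Setoid.eq_of_mem_eqv_class hP.2 (hQ u) (hvQ u) (hQ v) hu⟩
  have hφ : ∀ u v, g ⟨Q u, hQ u⟩ = g ⟨Q v, hQ v⟩ ↔ Q u = Q v := fun u v =>
    g.injective.eq_iff.trans Subtype.ext_iff
  refine ⟨fun v => g ⟨Q v, hQ v⟩, fun u v huv => ?_, fun v => ?_⟩
  · by_cases heq : Q u = Q v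
    · exact Or.inl ((hφ u v).2 heq)
    · exact Or.inr (hg ⟨fun h => heq (congrArg Subtype.val h), u, hvQ u, v, hvQ v, huv⟩)
  · convert hQ v using 1
    ext u
    exact (hφ u v).trans (hQ_eq_iff u v)

end WeakHom

theorem exists_embedding_prod_fin_fst_eq [Finite V] (φ : V → γ) {c : ℕ}
    (h : ∀ a, (φ ⁻¹' {a}).ncard ≤ c) : ∃ f : V ↪ γ × Fin c, ∀ v, (f v).1 = φ v := by
  have he : ∀ a, Nonempty ({v // φ v = a} ↪ Fin c) := by
    intro a
    have := Fintype.ofFinite {v // φ v = a}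
    refine Function.Embedding.nonempty_of_card_le ?_
    rw [Fintype.card_fin, ← Nat.card_eq_fintype_card]
    exact h a
  exact ⟨(Equiv.sigmaFiberEquiv φ).symm.toEmbedding.trans
    ((Function.Embedding.sigmaMap (Function.Embedding.refl γ) fun a => (he a).some).trans
      (Equiv.sigmaEquivProd γ (Fin c)).toEmbedding), fun _ => rfl⟩

theorem ncard_fiber_fst_le {c : ℕ} (f : V ↪ γ × Fin c) (a : γ) :
    {v | (f v).1 = a}.ncard ≤ c := by
  have hinj : Set.InjOn (fun v => (f v).2) {v | (f v).1 = a} := fun u hu v hv huv =>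
    f.injective (Prod.ext (hu.trans hv.symm) huv)
  calc {v | (f v).1 = a}.ncard
      ≤ (Set.univ : Set (Fin c)).ncard :=
        Set.ncard_le_ncard_of_injOn _ (fun _ _ => Set.mem_univ _) hinj Set.finite_univ
    _ = c := by rw [Set.ncard_univ, Nat.card_eq_fintype_card, Fintype.card_fin]

theorem ncard_fiber_prodMk_le {φ₁ : V → α} {φ₂ : V → β} {c : ℕ}
    (h : ∀ v, (φ₁ ⁻¹' {φ₁ v} ∩ φ₂ ⁻¹' {φ₂ v}).ncard ≤ c) (a : α × β) :
    ((fun v => (φ₁ v, φ₂ v)) ⁻¹' {a}).ncard ≤ c := by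
  rcases ((fun v => (φ₁ v, φ₂ v)) ⁻¹' {a}).eq_empty_or_nonempty with hempty | ⟨v, rfl⟩
  · simp [hempty]
  · have hfiber : (fun u => (φ₁ u, φ₂ u)) ⁻¹' {(φ₁ v, φ₂ v)} =
        φ₁ ⁻¹' {φ₁ v} ∩ φ₂ ⁻¹' {φ₂ v} :=
      Set.ext fun u => Prod.ext_iff
    exact hfiber ▸ h v

theorem contains_strongProd_completeGraph_iff {G : SimpleGraph V} {H : SimpleGraph γ}
    [Finite V] {c : ℕ} :
    Contains G (StrongProd H (completeGraph (Fin c))) ↔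
      ∃ f : V ↪ γ × Fin c, IsWeakHom G H fun v => (f v).1 := by
  simp only [contains_iff_exists_embedding_isWeakHom, isWeakHom_strongProd_iff,
    isWeakHom_completeGraph, and_true]

theorem stmt9_general {V α β : Type} [Fintype V]
    (G : SimpleGraph V) (H₁ : SimpleGraph α) (H₂ : SimpleGraph β) (c : ℕ) :
    Contains G (StrongProd (StrongProd H₁ H₂) (completeGraph (Fin c))) ↔
      ∃ P₁ P₂ : Set (Set V), Setoid.IsPartition P₁ ∧ Setoid.IsPartition P₂ ∧
        Contains (QuotientGraph G P₁) H₁ ∧ Contains (QuotientGraph G P₂) H₂ ∧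
        ∀ A₁ ∈ P₁, ∀ A₂ ∈ P₂, (A₁ ∩ A₂).ncard ≤ c := by
  rw [contains_strongProd_completeGraph_iff]
  constructor
  · rintro ⟨f, hf⟩
    rw [isWeakHom_strongProd_iff] at hf
    refine ⟨_, _, Setoid.isPartition_classes _, Setoid.isPartition_classes _,
      contains_quotientGraph_ker_classes hf.1, contains_quotientGraph_ker_classes hf.2, ?_⟩
    rintro _ ⟨x, rfl⟩ _ ⟨y, rfl⟩
    have hinter : {v | (f v).1.1 = (f x).1.1} ∩ {v | (f v).1.2 = (f y).1.2} =
        {v | (f v).1 = ((f x).1.1, (f y).1.2)} :=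
      Set.ext fun v => by simp [Prod.ext_iff]
    exact hinter ▸ ncard_fiber_fst_le f _
  · rintro ⟨P₁, P₂, hP₁, hP₂, h₁, h₂, hcap⟩
    obtain ⟨φ₁, hφ₁, hfib₁⟩ := exists_isWeakHom_fiber_mem_of_contains_quotientGraph hP₁ h₁
    obtain ⟨φ₂, hφ₂, hfib₂⟩ := exists_isWeakHom_fiber_mem_of_contains_quotientGraph hP₂ h₂
    obtain ⟨f, hf⟩ := exists_embedding_prod_fin_fst_eq _
      (ncard_fiber_prodMk_le fun v => hcap _ (hfib₁ v) _ (hfib₂ v))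
    refine ⟨f, isWeakHom_strongProd_iff.2 ?_⟩
    simp only [hf]
    exact ⟨hφ₁, hφ₂⟩

/-- A graph `G` is contained in `H₁ ⊠ H₂ ⊠ K_c` iff `G` has partitions `𝒫₁` and `𝒫₂` such
that `G/𝒫ᵢ` is contained in `Hᵢ` for `i ∈ {1,2}` and `|A₁ ∩ A₂| ≤ c` for all `A₁ ∈ 𝒫₁`,
`A₂ ∈ 𝒫₂`. -/
theorem stmt9 {V α β : Type} [Fintype V] [Fintype α] [Fintype β]
    (G : SimpleGraph V) (H₁ : SimpleGraph α) (H₂ : SimpleGraph β) (c : ℕ) (hc : 1 ≤ c) :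
    Contains G (StrongProd (StrongProd H₁ H₂) (completeGraph (Fin c))) ↔
      ∃ P₁ P₂ : Set (Set V), Setoid.IsPartition P₁ ∧ Setoid.IsPartition P₂ ∧
        Contains (QuotientGraph G P₁) H₁ ∧ Contains (QuotientGraph G P₂) H₂ ∧
        ∀ A₁ ∈ P₁, ∀ A₂ ∈ P₂, (A₁ ∩ A₂).ncard ≤ c :=
  stmt9_general G H₁ H₂ c
end
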